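/- Let R > 0, ξ̄ > 0, let u : [0,R] → ℝ be absolutely continuous with derivative u' ∈ L²([0,R]), and let y : [0,ξ̄] → [0,R] be nondecreasing with the property that ∫_{y(ξ)}^{y(ξ')} u'(x)² dx ≤ ξ' − ξ whenever 0 ≤ ξ ≤ ξ' ≤ ξ̄. Then for every ε ∈ (0,1] and every finite family of pairwise disjoint intervals [ξ_1,ξ'_1], …, [ξ_N,ξ'_N] contained in [0,ξ̄] with ∑_k (ξ'_k − ξ_k) ≤ ε, one has ∑_{k=1}^N |u(y(ξ'_k)) − u(y(ξ_k))| ≤ (1+R)·√ε. In particular the composed map ξ ↦ u(y(ξ)) is absolutely continuous on [0,ξ̄]. -/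

import Mathlib

open MeasureTheory Set Real

/-- Absolute continuity of the composed map `ξ ↦ u(y(ξ))`, with the quantitative
estimate `∑ₖ |u(y(ξ'ₖ)) − u(y(ξₖ))| ≤ (1+R)·√ε` for disjoint intervals of total
length at most `ε ≤ 1`.

The absolutely continuous function `u` on `[0,R]` is encoded through its
derivative `u'` via the fundamental theorem of calculus. -/
theorem stmt2 (R ξbar : ℝ) (hR : 0 < R) (hξbar : 0 < ξbar)
    (u u' : ℝ → ℝ)
    (hu'int : IntegrableOn u' (Set.Icc 0 R))
    (hu'L2 : MemLp u' 2 (volume.restrict (Set.Icc 0 R)))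
    (hu : ∀ x ∈ Set.Icc (0:ℝ) R, u x = u 0 + ∫ s in (0:ℝ)..x, u' s)
    (y : ℝ → ℝ)
    (hy_mem : ∀ ξ ∈ Set.Icc (0:ℝ) ξbar, y ξ ∈ Set.Icc (0:ℝ) R)
    (hy_mono : ∀ ξ ξ' : ℝ, 0 ≤ ξ → ξ ≤ ξ' → ξ' ≤ ξbar → y ξ ≤ y ξ')
    (hy_energy : ∀ ξ ξ' : ℝ, 0 ≤ ξ → ξ ≤ ξ' → ξ' ≤ ξbar →
      ∫ x in (y ξ)..(y ξ'), (u' x) ^ 2 ≤ ξ' - ξ) :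
    (∀ ε : ℝ, 0 < ε → ε ≤ 1 → ∀ N : ℕ, ∀ a b : Fin N → ℝ,
      (∀ k, a k ∈ Set.Icc (0:ℝ) ξbar) → (∀ k, b k ∈ Set.Icc (0:ℝ) ξbar) →
      (∀ k, a k ≤ b k) →
      (Pairwise fun i j => Disjoint (Set.Icc (a i) (b i)) (Set.Icc (a j) (b j))) →
      (∑ k, (b k - a k)) ≤ ε →
      ∑ k, |u (y (b k)) - u (y (a k))| ≤ (1 + R) * Real.sqrt ε) ∧
    (∀ ε : ℝ, 0 < ε → ∃ δ : ℝ, 0 < δ ∧ ∀ N : ℕ, ∀ a b : Fin N → ℝ,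
      (∀ k, a k ∈ Set.Icc (0:ℝ) ξbar) → (∀ k, b k ∈ Set.Icc (0:ℝ) ξbar) →
      (∀ k, a k ≤ b k) →
      (Pairwise fun i j => Disjoint (Set.Icc (a i) (b i)) (Set.Icc (a j) (b j))) →
      (∑ k, (b k - a k)) < δ →
      ∑ k, |u (y (b k)) - u (y (a k))| < ε) := by
  have hu'sq_int : IntegrableOn (fun x => (u' x) ^ 2) (Set.Icc 0 R) := by
    simpa [pow_two, IntegrableOn] using hu'L2.integrable_sq
  have key : ∀ ε : ℝ, 0 < ε → ε ≤ 1 → ∀ N : ℕ, ∀ a b : Fin N → ℝ,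
      (∀ k, a k ∈ Set.Icc (0:ℝ) ξbar) → (∀ k, b k ∈ Set.Icc (0:ℝ) ξbar) →
      (∀ k, a k ≤ b k) →
      (Pairwise fun i j => Disjoint (Set.Icc (a i) (b i)) (Set.Icc (a j) (b j))) →
      (∑ k, (b k - a k)) ≤ ε →
      ∑ k, |u (y (b k)) - u (y (a k))| ≤ (1 + R) * Real.sqrt ε := by
    intro ε hε hε1 N a b ha hb hab hdisj hsum
    set lam := Real.sqrt ε with hlam
    have hlam_pos : 0 < lam := Real.sqrt_pos.mpr hε
    have hyab : ∀ k, y (a k) ≤ y (b k) := fun k =>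
      hy_mono _ _ (ha k).1 (hab k) (hb k).2
    have hysub : ∀ k, Set.Icc (y (a k)) (y (b k)) ⊆ Set.Icc 0 R := fun k =>
      Set.Icc_subset_Icc (hy_mem _ (ha k)).1 (hy_mem _ (hb k)).2
    -- per-interval bound
    have hterm : ∀ k, |u (y (b k)) - u (y (a k))| ≤
        lam / 2 * (y (b k) - y (a k)) + 1 / (2 * lam) * (b k - a k) := by
      intro k
      have hint1 : IntervalIntegrable u' volume (y (a k)) (y (b k)) := by
        rw [intervalIntegrable_iff]
        exact hu'int.mono_set (by
          rw [Set.uIoc_of_le (hyab k)]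
          exact Set.Ioc_subset_Icc_self.trans (hysub k))
      have hint2 : IntervalIntegrable (fun x => (u' x) ^ 2) volume (y (a k)) (y (b k)) := by
        rw [intervalIntegrable_iff]
        exact hu'sq_int.mono_set (by
          rw [Set.uIoc_of_le (hyab k)]
          exact Set.Ioc_subset_Icc_self.trans (hysub k))
      have hint0a : IntervalIntegrable u' volume 0 (y (a k)) := by
        rw [intervalIntegrable_iff]
        exact hu'int.mono_set (by
          rw [Set.uIoc_of_le (hy_mem _ (ha k)).1]
          exact Set.Ioc_subset_Icc_self.trans (Set.Icc_subset_Icc le_rfl (hy_mem _ (ha k)).2))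
      have hval : u (y (b k)) - u (y (a k)) = ∫ x in (y (a k))..(y (b k)), u' x := by
        rw [hu _ (hy_mem _ (hb k)), hu _ (hy_mem _ (ha k))]
        have := intervalIntegral.integral_add_adjacent_intervals hint0a hint1
        linarith [this]
      rw [hval]
      have h1 : |∫ x in (y (a k))..(y (b k)), u' x| ≤
          ∫ x in (y (a k))..(y (b k)), |u' x| :=
        intervalIntegral.abs_integral_le_integral_abs (hyab k)
      have h2 : (∫ x in (y (a k))..(y (b k)), |u' x|) ≤
          ∫ x in (y (a k))..(y (b k)), (lam / 2 + (u' x) ^ 2 / (2 * lam)) := by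
        apply intervalIntegral.integral_mono_on (hyab k) hint1.abs
        · exact (intervalIntegrable_const).add (hint2.div_const _)
        · intro x hx
          rw [show lam / 2 + u' x ^ 2 / (2 * lam) = (lam ^ 2 + u' x ^ 2) / (2 * lam) by
            field_simp, le_div_iff₀ (by positivity : (0:ℝ) < 2 * lam)]
          nlinarith [sq_nonneg (|u' x| - lam), sq_abs (u' x)]
      have h3 : (∫ x in (y (a k))..(y (b k)), (lam / 2 + (u' x) ^ 2 / (2 * lam))) =
          lam / 2 * (y (b k) - y (a k)) +
            (∫ x in (y (a k))..(y (b k)), (u' x) ^ 2) / (2 * lam) := by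
        rw [intervalIntegral.integral_add intervalIntegrable_const (hint2.div_const _),
          intervalIntegral.integral_const, intervalIntegral.integral_div]
        simp only [smul_eq_mul]; ring
      have h4 : (∫ x in (y (a k))..(y (b k)), (u' x) ^ 2) / (2 * lam) ≤
          1 / (2 * lam) * (b k - a k) := by
        have := hy_energy _ _ (ha k).1 (hab k) (hb k).2
        rw [div_eq_mul_one_div, mul_comm]
        exact mul_le_mul_of_nonneg_left this (by positivity)
      linarith
    -- total image length ≤ R
    have hlen : ∑ k, (y (b k) - y (a k)) ≤ R := by
      have hord : ∀ i j : Fin N, i ≠ j → b i < a j ∨ b j < a i := by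
        intro i j hij
        by_contra hcon
        push_neg at hcon
        obtain ⟨h1, h2⟩ := hcon
        have hd : Disjoint (Set.Icc (a i) (b i)) (Set.Icc (a j) (b j)) := hdisj hij
        rw [Set.disjoint_left] at hd
        exact hd (show max (a i) (a j) ∈ Set.Icc (a i) (b i) from
            ⟨le_max_left _ _, max_le (hab i) h1⟩)
          (show max (a i) (a j) ∈ Set.Icc (a j) (b j) from
            ⟨le_max_right _ _, max_le h2 (hab j)⟩)
      have hpair : Pairwise (Function.onFun Disjoint
          fun k => Set.Ioc (y (a k)) (y (b k))) := by
        intro i j hij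
        rcases hord i j hij with h | h
        · have hy1 : y (b i) ≤ y (a j) := hy_mono _ _ (hb i).1 h.le (ha j).2
          rw [Function.onFun, Set.Ioc_disjoint_Ioc]
          calc min (y (b i)) (y (b j)) ≤ y (b i) := min_le_left _ _
            _ ≤ y (a j) := hy1
            _ ≤ max (y (a i)) (y (a j)) := le_max_right _ _
        · have hy1 : y (b j) ≤ y (a i) := hy_mono _ _ (hb j).1 h.le (ha i).2
          rw [Function.onFun, Set.Ioc_disjoint_Ioc]
          calc min (y (b i)) (y (b j)) ≤ y (b j) := min_le_right _ _
            _ ≤ y (a i) := hy1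
            _ ≤ max (y (a i)) (y (a j)) := le_max_left _ _
      have hmeas := measure_iUnion (μ := volume) hpair (fun k => measurableSet_Ioc)
      have hsub : (⋃ k, Set.Ioc (y (a k)) (y (b k))) ⊆ Set.Icc 0 R :=
        Set.iUnion_subset fun k => Set.Ioc_subset_Icc_self.trans (hysub k)
      have hle : ∑' k, volume (Set.Ioc (y (a k)) (y (b k))) ≤ volume (Set.Icc (0:ℝ) R) :=
        hmeas ▸ measure_mono hsub
      rw [tsum_fintype] at hle
      simp only [Real.volume_Ioc, Real.volume_Icc, sub_zero] at hle
      rw [← ENNReal.ofReal_sum_of_nonneg (fun k _ => sub_nonneg.mpr (hyab k))] at hle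
      exact (ENNReal.ofReal_le_ofReal_iff hR.le).mp hle
    have heps : ε = lam * lam := (Real.mul_self_sqrt hε.le).symm
    have hdiv : 1 / (2 * lam) * ε = lam / 2 := by
      rw [heps]; field_simp
    calc ∑ k, |u (y (b k)) - u (y (a k))|
        ≤ ∑ k, (lam / 2 * (y (b k) - y (a k)) + 1 / (2 * lam) * (b k - a k)) :=
          Finset.sum_le_sum fun k _ => hterm k
      _ = lam / 2 * (∑ k, (y (b k) - y (a k))) + 1 / (2 * lam) * (∑ k, (b k - a k)) := by
          rw [Finset.sum_add_distrib, Finset.mul_sum, Finset.mul_sum]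
      _ ≤ lam / 2 * R + 1 / (2 * lam) * ε := by
          gcongr <;> positivity
      _ = lam / 2 * R + lam / 2 := by rw [hdiv]
      _ ≤ (1 + R) * lam := by nlinarith [hlam_pos.le]
  refine ⟨key, ?_⟩
  intro ε hε
  refine ⟨min 1 ((ε / (1 + R)) ^ 2), by positivity, ?_⟩
  intro N a b ha hb hab hdisj hsum
  set s := ∑ k, (b k - a k) with hs
  rcases le_or_gt s 0 with h0 | h0
  · have hz : ∀ k ∈ Finset.univ, |u (y (b k)) - u (y (a k))| = 0 := by
      have hsz : s = 0 := le_antisymm h0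
        (Finset.sum_nonneg fun k _ => sub_nonneg.mpr (hab k))
      intro k _
      have hk : b k - a k = 0 := by
        have := (Finset.sum_eq_zero_iff_of_nonneg
          (fun k _ => sub_nonneg.mpr (hab k))).mp hsz k (Finset.mem_univ k)
        exact this
      have : a k = b k := by linarith
      simp [this]
    rw [Finset.sum_congr rfl hz]
    simpa using hε
  · have hs1 : s ≤ 1 := le_of_lt (lt_of_lt_of_le hsum (min_le_left _ _))
    have hkey := key s h0 hs1 N a b ha hb hab hdisj le_rfl
    have hlt : Real.sqrt s < ε / (1 + R) := by
      have h2 : s < (ε / (1 + R)) ^ 2 := lt_of_lt_of_le hsum (min_le_right _ _)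
      have hpos : (0:ℝ) < ε / (1 + R) := by positivity
      calc Real.sqrt s < Real.sqrt ((ε / (1 + R)) ^ 2) := by
            exact Real.sqrt_lt_sqrt h0.le h2
        _ = ε / (1 + R) := Real.sqrt_sq hpos.le
    calc ∑ k, |u (y (b k)) - u (y (a k))| ≤ (1 + R) * Real.sqrt s := hkey
      _ < (1 + R) * (ε / (1 + R)) := by
          exact mul_lt_mul_of_pos_left hlt (by positivity)
      _ = ε := by field_simp
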